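/- arXiv:2403.09133 — 2 statements merged into one kernel-verified Lean document; each statement's English description precedes it below -/
import Mathlib

section
/- Dual-increment bound (Lemma 3.1(iii), standalone form): Let (U^k, V^k, λ^k) and (U^{k+1}, V^{k+1}, λ^{k+1}) satisfy the optimality equations ∇f(V^j(U^j)ᵀ)U^j + Σ_{i=1}^m λ^j_i A_i U^j − γ(U^j − V^j) = 0 for j = k and j = k+1. Suppose ‖U^j‖_F ≤ δ and ‖V^j‖_F ≤ δ for j = k, k+1, σ_min(𝒞(U^k)) ≥ η and σ_min(𝒞(U^{k+1})) ≥ η for some η > 0, ‖∇f(X)‖_F ≤ L_f and ‖∇f(X) − ∇f(Y)‖_F ≤ L‖X − Y‖_F for all X, Y with ‖X‖_F, ‖Y‖_F ≤ δ². Then ‖λ^{k+1} − λ^k‖_2² ≤ c₁‖U^{k+1} − U^k‖_F² + c₂‖V^{k+1} − V^k‖_F², where c₁ = (2/η²)(Lδ² + L_f + γ + (1/η)L_f δ√(s_A) + (2/η)γδ√(s_A))² and c₂ = (2/η²)(Lδ² + γ)². -/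
open Matrix
open scoped BigOperators

noncomputable section

/-- Frobenius inner product of two real matrices. -/
def frobInner {α β : Type*} [Fintype α] [Fintype β] (X Y : Matrix α β ℝ) : ℝ :=
  ∑ i, ∑ j, X i j * Y i j

/-- Frobenius norm of a real matrix. -/
def frobNorm {α β : Type*} [Fintype α] [Fintype β] (X : Matrix α β ℝ) : ℝ :=
  Real.sqrt (∑ i, ∑ j, (X i j) ^ 2)

/-- Euclidean norm of a real vector. -/
def vecNorm {α : Type*} [Fintype α] (v : α → ℝ) : ℝ :=
  Real.sqrt (∑ i, (v i) ^ 2)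

/-- The linear map `𝒜(X) = (⟨A 1, X⟩, …, ⟨A m, X⟩)`. -/
def Aop {n m : ℕ} (A : Fin m → Matrix (Fin n) (Fin n) ℝ)
    (X : Matrix (Fin n) (Fin n) ℝ) : Fin m → ℝ :=
  fun i => frobInner (A i) X

/-- `s_A = Σ_i ‖A_i‖_F²`. -/
def sA {n m : ℕ} (A : Fin m → Matrix (Fin n) (Fin n) ℝ) : ℝ :=
  ∑ i, (frobNorm (A i)) ^ 2

/-- `(U, V, λ)` is an ε-KKT point of the penalized problem
`min f(UVᵀ) + (γ/2)‖U-V‖² s.t. 𝒜(UVᵀ) = b`, where `grad` denotes the gradient of `f`. -/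
def IsPenEpsKKT {n m r : ℕ} (grad : Matrix (Fin n) (Fin n) ℝ → Matrix (Fin n) (Fin n) ℝ)
    (A : Fin m → Matrix (Fin n) (Fin n) ℝ) (b : Fin m → ℝ) (γ ε : ℝ)
    (U V : Matrix (Fin n) (Fin r) ℝ) (lam : Fin m → ℝ) : Prop :=
  frobNorm (grad (U * Vᵀ) * V + γ • (U - V) + ∑ i, lam i • (A i * V)) ≤ ε ∧
  frobNorm (grad (V * Uᵀ) * U + γ • (V - U) + ∑ i, lam i • (A i * U)) ≤ ε ∧
  vecNorm (fun i => Aop A (U * Vᵀ) i - b i) ≤ ε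

/-- `(U, λ)` is an ε-KKT point of the Burer–Monteiro problem
`min f(UUᵀ) s.t. 𝒜(UUᵀ) = b`, where `grad` denotes the gradient of `f`. -/
def IsBMEpsKKT {n m r : ℕ} (grad : Matrix (Fin n) (Fin n) ℝ → Matrix (Fin n) (Fin n) ℝ)
    (A : Fin m → Matrix (Fin n) (Fin n) ℝ) (b : Fin m → ℝ) (ε : ℝ)
    (U : Matrix (Fin n) (Fin r) ℝ) (lam : Fin m → ℝ) : Prop :=
  frobNorm ((2 : ℝ) • (grad (U * Uᵀ) * U) + ∑ i, lam i • (A i * U)) ≤ ε ∧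
  vecNorm (fun i => Aop A (U * Uᵀ) i - b i) ≤ ε

/-- The augmented Lagrangian `L_ρ(U,V,λ)` of the penalized problem. -/
def augL {n m r : ℕ} (f : Matrix (Fin n) (Fin n) ℝ → ℝ)
    (A : Fin m → Matrix (Fin n) (Fin n) ℝ) (b : Fin m → ℝ) (ρ γ : ℝ)
    (U V : Matrix (Fin n) (Fin r) ℝ) (lam : Fin m → ℝ) : ℝ :=
  f (U * Vᵀ) + γ / 2 * (frobNorm (U - V)) ^ 2
    + ∑ i, lam i * (Aop A (U * Vᵀ) i - b i)
    + ρ / 2 * (vecNorm (fun i => Aop A (U * Vᵀ) i - b i)) ^ 2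

/-- The level set `S_β` of the penalty function. -/
def Sset {n m r : ℕ} (f : Matrix (Fin n) (Fin n) ℝ → ℝ)
    (A : Fin m → Matrix (Fin n) (Fin n) ℝ) (b : Fin m → ℝ) (ρ₀ β : ℝ) :
    Set (Matrix (Fin n) (Fin r) ℝ × Matrix (Fin n) (Fin r) ℝ) :=
  {p | f (p.1 * p.2ᵀ) + ρ₀ / 2 * (frobNorm (p.1 - p.2)) ^ 2
      + ρ₀ / 2 * (vecNorm (fun i => Aop A (p.1 * p.2ᵀ) i - b i)) ^ 2 ≤ β}

/-- `𝒞(U)`: the `nr × m` matrix whose `i`-th column is the vectorization of `A_i U`. -/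
def Cmat {n m r : ℕ} (A : Fin m → Matrix (Fin n) (Fin n) ℝ)
    (U : Matrix (Fin n) (Fin r) ℝ) : Matrix (Fin n × Fin r) (Fin m) ℝ :=
  Matrix.of fun p i => (A i * U) p.1 p.2

/-- Smallest singular value of a real matrix, as the infimum of `‖Mx‖` over unit vectors. -/
def sigmaMin {α β : Type*} [Fintype α] [Fintype β] (M : Matrix α β ℝ) : ℝ :=
  sInf {s | ∃ x : β → ℝ, vecNorm x = 1 ∧ s = vecNorm (M.mulVec x)}

/-- Norm of the full gradient of the augmented Lagrangian at `(U, V, λ)`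
(for symmetric `f`, with `grad` the gradient of `f`). -/
def gradAugLNorm {n m r : ℕ} (grad : Matrix (Fin n) (Fin n) ℝ → Matrix (Fin n) (Fin n) ℝ)
    (A : Fin m → Matrix (Fin n) (Fin n) ℝ) (b : Fin m → ℝ) (ρ γ : ℝ)
    (U V : Matrix (Fin n) (Fin r) ℝ) (lam : Fin m → ℝ) : ℝ :=
  Real.sqrt
    ((frobNorm (grad (U * Vᵀ) * V + γ • (U - V)
        + ∑ i, (lam i + ρ * (Aop A (U * Vᵀ) i - b i)) • (A i * V))) ^ 2
      + (frobNorm (grad (V * Uᵀ) * U + γ • (V - U)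
        + ∑ i, (lam i + ρ * (Aop A (U * Vᵀ) i - b i)) • (A i * U))) ^ 2
      + (vecNorm (fun i => Aop A (U * Vᵀ) i - b i)) ^ 2)

/-- Distance between two primal-dual triples, induced by the Frobenius/Euclidean norms. -/
def tripDist {n m r : ℕ}
    (p q : Matrix (Fin n) (Fin r) ℝ × Matrix (Fin n) (Fin r) ℝ × (Fin m → ℝ)) : ℝ :=
  Real.sqrt ((frobNorm (p.1 - q.1)) ^ 2 + (frobNorm (p.2.1 - q.2.1)) ^ 2
    + (vecNorm (fun i => p.2.2 i - q.2.2 i)) ^ 2)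

/-- The set `𝒲` of KKT points of the penalized problem. -/
def KKTset {n m : ℕ} (r : ℕ) (grad : Matrix (Fin n) (Fin n) ℝ → Matrix (Fin n) (Fin n) ℝ)
    (A : Fin m → Matrix (Fin n) (Fin n) ℝ) (b : Fin m → ℝ) (γ : ℝ) :
    Set (Matrix (Fin n) (Fin r) ℝ × Matrix (Fin n) (Fin r) ℝ × (Fin m → ℝ)) :=
  {p | IsPenEpsKKT grad A b γ 0 p.1 p.2.1 p.2.2}

/-!
Subtracting the two stationarity equations expresses `∑ᵢ (λᵏ⁺¹ᵢ - λᵏᵢ) Aᵢ Uᵏ⁺¹`, i.e.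
`𝒞(Uᵏ⁺¹) (λᵏ⁺¹ - λᵏ)`, through the increments `Uᵏ⁺¹ - Uᵏ`, `Vᵏ⁺¹ - Vᵏ`, the gradient increment
(controlled by the Lipschitz constant) and the term `∑ᵢ λᵏᵢ Aᵢ (Uᵏ⁺¹ - Uᵏ)`. The smallest singular
value bound turns this into `η ‖λᵏ⁺¹ - λᵏ‖ ≤ P ‖Uᵏ⁺¹ - Uᵏ‖ + Q ‖Vᵏ⁺¹ - Vᵏ‖`, where the size of `λᵏ`
entering `P` is bounded by applying the same singular value argument to the stationarity equation
at step `k` alone. Squaring with `(x + y)² ≤ 2x² + 2y²` gives the constants `c₁, c₂`.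
-/

attribute [local instance] Matrix.frobeniusNormedAddCommGroup Matrix.frobeniusNormedSpace

section Norms

variable {α β : Type*} [Fintype α] [Fintype β]

lemma frobNorm_eq_norm (X : Matrix α β ℝ) : frobNorm X = ‖X‖ := by
  rw [frobNorm, Matrix.frobenius_norm_def, Real.sqrt_eq_rpow]
  congr 1
  refine Finset.sum_congr rfl fun i _ => Finset.sum_congr rfl fun j _ => ?_
  rw [Real.norm_eq_abs, Real.rpow_two, sq_abs]

lemma vecNorm_nonneg (v : α → ℝ) : 0 ≤ vecNorm v := Real.sqrt_nonneg _

lemma vecNorm_smul (c : ℝ) (v : α → ℝ) : vecNorm (c • v) = |c| * vecNorm v := by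
  simp only [vecNorm, Pi.smul_apply, smul_eq_mul, mul_pow]
  rw [← Finset.mul_sum, Real.sqrt_mul (sq_nonneg c), Real.sqrt_sq_eq_abs]

lemma mul_vecNorm_le_vecNorm_mulVec {M : Matrix α β ℝ} {η : ℝ} (h : η ≤ sigmaMin M)
    (x : β → ℝ) : η * vecNorm x ≤ vecNorm (M *ᵥ x) := by
  rcases (vecNorm_nonneg x).eq_or_lt with hx | hx
  · rw [← hx, mul_zero]
    exact vecNorm_nonneg _
  have hunit : vecNorm ((vecNorm x)⁻¹ • x) = 1 := by
    rw [vecNorm_smul, abs_of_pos (inv_pos.mpr hx), inv_mul_cancel₀ hx.ne']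
  have hbdd : BddBelow {s | ∃ y : β → ℝ, vecNorm y = 1 ∧ s = vecNorm (M *ᵥ y)} :=
    ⟨0, by rintro s ⟨y, -, rfl⟩; exact vecNorm_nonneg _⟩
  have hle : η ≤ (vecNorm x)⁻¹ * vecNorm (M *ᵥ x) := by
    rw [← abs_of_pos (inv_pos.mpr hx), ← vecNorm_smul, ← Matrix.mulVec_smul]
    exact h.trans (csInf_le hbdd ⟨_, hunit, rfl⟩)
  rwa [inv_mul_eq_div, le_div_iff₀ hx] at hle

lemma norm_sum_smul_le {ι E : Type*} [Fintype ι] [SeminormedAddCommGroup E] [NormedSpace ℝ E]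
    (c : ι → ℝ) (x : ι → E) : ‖∑ i, c i • x i‖ ≤ vecNorm c * √(∑ i, ‖x i‖ ^ 2) :=
  calc ‖∑ i, c i • x i‖ ≤ ∑ i, |c i| * ‖x i‖ := by
        simpa only [norm_smul, Real.norm_eq_abs] using norm_sum_le Finset.univ fun i => c i • x i
    _ ≤ √(∑ i, |c i| ^ 2) * √(∑ i, ‖x i‖ ^ 2) := Real.sum_mul_le_sqrt_mul_sqrt _ _ _
    _ = vecNorm c * √(∑ i, ‖x i‖ ^ 2) := by simp only [sq_abs, vecNorm]

lemma norm_mul_transpose_sub_le {κ : Type*} [Fintype κ] (U U' : Matrix α β ℝ)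
    (V V' : Matrix κ β ℝ) :
    ‖V' * U'ᵀ - V * Uᵀ‖ ≤ ‖V‖ * ‖U' - U‖ + ‖U'‖ * ‖V' - V‖ := by
  have hsplit : V' * U'ᵀ - V * Uᵀ = V * (U' - U)ᵀ + (V' - V) * U'ᵀ := by
    rw [Matrix.transpose_sub, Matrix.sub_mul, Matrix.mul_sub]; abel
  calc ‖V' * U'ᵀ - V * Uᵀ‖ ≤ ‖V‖ * ‖(U' - U)ᵀ‖ + ‖V' - V‖ * ‖U'ᵀ‖ := by
        rw [hsplit]
        exact (norm_add_le _ _).trans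
          (add_le_add (Matrix.frobenius_norm_mul _ _) (Matrix.frobenius_norm_mul _ _))
    _ = ‖V‖ * ‖U' - U‖ + ‖U'‖ * ‖V' - V‖ := by
        rw [Matrix.frobenius_norm_transpose, Matrix.frobenius_norm_transpose, mul_comm ‖V' - V‖]

end Norms

section Stationarity

variable {n m r : ℕ} {A : Fin m → Matrix (Fin n) (Fin n) ℝ}

lemma vecNorm_mulVec_Cmat (U : Matrix (Fin n) (Fin r) ℝ) (x : Fin m → ℝ) :
    vecNorm (Cmat A U *ᵥ x) = ‖∑ i, x i • (A i * U)‖ := by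
  rw [← frobNorm_eq_norm, vecNorm, frobNorm, Fintype.sum_prod_type]
  simp only [Matrix.mulVec, dotProduct, Cmat, Matrix.of_apply, Matrix.sum_apply,
    Matrix.smul_apply, smul_eq_mul, mul_comm]

lemma norm_sum_smul_mul_le (lam : Fin m → ℝ) (U : Matrix (Fin n) (Fin r) ℝ) :
    ‖∑ i, lam i • (A i * U)‖ ≤ vecNorm lam * √(sA A) * ‖U‖ := by
  simp only [← Matrix.smul_mul, ← Matrix.sum_mul]
  refine (Matrix.frobenius_norm_mul _ _).trans (mul_le_mul_of_nonneg_right ?_ (norm_nonneg _))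
  simpa only [sA, frobNorm_eq_norm] using norm_sum_smul_le lam A

variable {γ δ η Lf : ℝ} {G G' : Matrix (Fin n) (Fin n) ℝ}
  {U V U' V' : Matrix (Fin n) (Fin r) ℝ} {lam lam' : Fin m → ℝ}

lemma mul_vecNorm_le_of_stationary (hγ : 0 ≤ γ)
    (hstat : G * U + (∑ i, lam i • (A i * U)) - γ • (U - V) = 0)
    (hU : ‖U‖ ≤ δ) (hV : ‖V‖ ≤ δ) (hG : ‖G‖ ≤ Lf) (hη : η ≤ sigmaMin (Cmat A U)) :
    η * vecNorm lam ≤ Lf * δ + 2 * γ * δ := by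
  have hdual : ∑ i, lam i • (A i * U) = γ • (U - V) - G * U := by
    rw [← sub_eq_zero, ← hstat]; abel
  calc η * vecNorm lam ≤ ‖γ • (U - V) - G * U‖ := by
        rw [← hdual, ← vecNorm_mulVec_Cmat]
        exact mul_vecNorm_le_vecNorm_mulVec hη lam
    _ ≤ γ * (‖U‖ + ‖V‖) + ‖G‖ * ‖U‖ := by
        refine (norm_sub_le _ _).trans (add_le_add ?_ (Matrix.frobenius_norm_mul _ _))
        rw [norm_smul, Real.norm_eq_abs, abs_of_nonneg hγ]
        exact mul_le_mul_of_nonneg_left (norm_sub_le _ _) hγ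
    _ ≤ γ * (δ + δ) + Lf * δ := by
        gcongr
        exact (norm_nonneg _).trans hG
    _ = Lf * δ + 2 * γ * δ := by ring

lemma sum_sub_smul_eq_of_stationary
    (hstat : G * U + (∑ i, lam i • (A i * U)) - γ • (U - V) = 0)
    (hstat' : G' * U' + (∑ i, lam' i • (A i * U')) - γ • (U' - V') = 0) :
    ∑ i, (lam' i - lam i) • (A i * U')
      = γ • (U' - U) - γ • (V' - V) - (G' - G) * U' - G * (U' - U)
        - ∑ i, lam i • (A i * (U' - U)) := by
  have hsplit : ∑ i, (lam' i - lam i) • (A i * U')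
      = ∑ i, lam' i • (A i * U') - ∑ i, lam i • (A i * U) - ∑ i, lam i • (A i * (U' - U)) := by
    simp only [← Finset.sum_sub_distrib, Matrix.mul_sub, smul_sub, sub_smul]
    exact Finset.sum_congr rfl fun i _ => by abel
  rw [hsplit, eq_sub_of_add_eq' (sub_eq_zero.mp hstat), eq_sub_of_add_eq' (sub_eq_zero.mp hstat')]
  simp only [smul_sub, Matrix.sub_mul, Matrix.mul_sub]
  abel

lemma mul_vecNorm_sub_le_of_stationary {L Λ : ℝ} (hγ : 0 ≤ γ)
    (hstat : G * U + (∑ i, lam i • (A i * U)) - γ • (U - V) = 0)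
    (hstat' : G' * U' + (∑ i, lam' i • (A i * U')) - γ • (U' - V') = 0)
    (hU' : ‖U'‖ ≤ δ) (hG : ‖G‖ ≤ Lf)
    (hGG' : ‖G' - G‖ ≤ L * (δ * ‖U' - U‖ + δ * ‖V' - V‖))
    (hlam : vecNorm lam ≤ Λ) (hη : η ≤ sigmaMin (Cmat A U')) :
    η * vecNorm (fun i => lam' i - lam i)
      ≤ (L * δ ^ 2 + Lf + γ + Λ * √(sA A)) * ‖U' - U‖ + (L * δ ^ 2 + γ) * ‖V' - V‖ := by
  have hγsmul : ∀ X : Matrix (Fin n) (Fin r) ℝ, ‖γ • X‖ = γ * ‖X‖ := fun X => by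
    rw [norm_smul, Real.norm_eq_abs, abs_of_nonneg hγ]
  calc η * vecNorm (fun i => lam' i - lam i)
      ≤ ‖γ • (U' - U) - γ • (V' - V) - (G' - G) * U' - G * (U' - U)
          - ∑ i, lam i • (A i * (U' - U))‖ := by
        rw [← sum_sub_smul_eq_of_stationary hstat hstat', ← vecNorm_mulVec_Cmat]
        exact mul_vecNorm_le_vecNorm_mulVec hη _
    _ ≤ ‖γ • (U' - U)‖ + ‖γ • (V' - V)‖ + ‖G' - G‖ * ‖U'‖ + ‖G‖ * ‖U' - U‖
          + vecNorm lam * √(sA A) * ‖U' - U‖ := by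
        refine (norm_sub_le _ _).trans (add_le_add ?_ (norm_sum_smul_mul_le _ _))
        refine (norm_sub_le _ _).trans (add_le_add ?_ (Matrix.frobenius_norm_mul _ _))
        refine (norm_sub_le _ _).trans (add_le_add ?_ (Matrix.frobenius_norm_mul _ _))
        exact norm_sub_le _ _
    _ ≤ γ * ‖U' - U‖ + γ * ‖V' - V‖ + L * (δ * ‖U' - U‖ + δ * ‖V' - V‖) * δ + Lf * ‖U' - U‖
          + Λ * √(sA A) * ‖U' - U‖ := by
        rw [hγsmul, hγsmul]
        have hLnonneg : 0 ≤ L * (δ * ‖U' - U‖ + δ * ‖V' - V‖) := (norm_nonneg _).trans hGG'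
        gcongr
    _ = (L * δ ^ 2 + Lf + γ + Λ * √(sA A)) * ‖U' - U‖ + (L * δ ^ 2 + γ) * ‖V' - V‖ := by ring

end Stationarity

lemma sq_le_of_mul_le_add {η N x y : ℝ} (hη : 0 < η) (hN : 0 ≤ N) (h : η * N ≤ x + y) :
    N ^ 2 ≤ 2 / η ^ 2 * x ^ 2 + 2 / η ^ 2 * y ^ 2 := by
  have hN' : N ≤ (x + y) / η := by rwa [le_div_iff₀ hη, mul_comm]
  calc N ^ 2 ≤ ((x + y) / η) ^ 2 := pow_le_pow_left₀ hN hN' 2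
    _ = (x + y) ^ 2 / η ^ 2 := div_pow _ _ _
    _ ≤ 2 * (x ^ 2 + y ^ 2) / η ^ 2 := by gcongr; exact add_sq_le
    _ = 2 / η ^ 2 * x ^ 2 + 2 / η ^ 2 * y ^ 2 := by ring

theorem dual_increment_bound_general
    (n m r : ℕ)
    (grad : Matrix (Fin n) (Fin n) ℝ → Matrix (Fin n) (Fin n) ℝ)
    (A : Fin m → Matrix (Fin n) (Fin n) ℝ)
    (γ δ Lf L η : ℝ) (hγ : 0 < γ) (hδ : 0 < δ) (hL : 0 < L) (hη : 0 < η)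
    (Uk Vk Uk1 Vk1 : Matrix (Fin n) (Fin r) ℝ) (lamk lamk1 : Fin m → ℝ)
    (hstatk : grad (Vk * Ukᵀ) * Uk + (∑ i, lamk i • (A i * Uk)) - γ • (Uk - Vk) = 0)
    (hstatk1 : grad (Vk1 * Uk1ᵀ) * Uk1 + (∑ i, lamk1 i • (A i * Uk1)) - γ • (Uk1 - Vk1) = 0)
    (hUk : frobNorm Uk ≤ δ) (hVk : frobNorm Vk ≤ δ)
    (hUk1 : frobNorm Uk1 ≤ δ) (hVk1 : frobNorm Vk1 ≤ δ)
    (hsmink : η ≤ sigmaMin (Cmat A Uk)) (hsmink1 : η ≤ sigmaMin (Cmat A Uk1))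
    (hgradB : ∀ X : Matrix (Fin n) (Fin n) ℝ, frobNorm X ≤ δ ^ 2 → frobNorm (grad X) ≤ Lf)
    (hgradLip : ∀ X Y : Matrix (Fin n) (Fin n) ℝ, frobNorm X ≤ δ ^ 2 → frobNorm Y ≤ δ ^ 2 →
      frobNorm (grad X - grad Y) ≤ L * frobNorm (X - Y))
    (c₁ c₂ : ℝ)
    (hc₁ : c₁ = 2 / η ^ 2 * (L * δ ^ 2 + Lf + γ + 1 / η * Lf * δ * Real.sqrt (sA A)
      + 2 / η * γ * δ * Real.sqrt (sA A)) ^ 2)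
    (hc₂ : c₂ = 2 / η ^ 2 * (L * δ ^ 2 + γ) ^ 2) :
    (vecNorm (fun i => lamk1 i - lamk i)) ^ 2
      ≤ c₁ * (frobNorm (Uk1 - Uk)) ^ 2 + c₂ * (frobNorm (Vk1 - Vk)) ^ 2 := by
  simp only [frobNorm_eq_norm] at *
  have hprod : ∀ U V : Matrix (Fin n) (Fin r) ℝ, ‖U‖ ≤ δ → ‖V‖ ≤ δ → ‖V * Uᵀ‖ ≤ δ ^ 2 :=
    fun U V hU hV => by
      rw [sq]
      refine (Matrix.frobenius_norm_mul _ _).trans ?_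
      rw [Matrix.frobenius_norm_transpose]
      exact mul_le_mul hV hU (norm_nonneg _) hδ.le
  have hGk := hgradB _ (hprod _ _ hUk hVk)
  have hGG' : ‖grad (Vk1 * Uk1ᵀ) - grad (Vk * Ukᵀ)‖
      ≤ L * (δ * ‖Uk1 - Uk‖ + δ * ‖Vk1 - Vk‖) :=
    (hgradLip _ _ (hprod _ _ hUk1 hVk1) (hprod _ _ hUk hVk)).trans <|
      mul_le_mul_of_nonneg_left ((norm_mul_transpose_sub_le _ _ _ _).trans
        (by gcongr)) hL.le
  have hlamk : vecNorm lamk ≤ (Lf * δ + 2 * γ * δ) / η := by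
    rw [le_div_iff₀ hη, mul_comm]
    exact mul_vecNorm_le_of_stationary hγ.le hstatk hUk hVk hGk hsmink
  have hstep := mul_vecNorm_sub_le_of_stationary hγ.le hstatk hstatk1 hUk1 hGk hGG' hlamk hsmink1
  refine (sq_le_of_mul_le_add hη (vecNorm_nonneg _) hstep).trans_eq ?_
  rw [hc₁, hc₂]
  field_simp
  ring

/-- Lemma 3.1(iii), standalone form: dual-increment bound. -/
theorem dual_increment_bound
    (n m r : ℕ) (hn : 0 < n) (hm : 0 < m) (hr : 0 < r)
    (f : Matrix (Fin n) (Fin n) ℝ → ℝ)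
    (grad : Matrix (Fin n) (Fin n) ℝ → Matrix (Fin n) (Fin n) ℝ)
    (hgrad : ∀ X H : Matrix (Fin n) (Fin n) ℝ,
      HasDerivAt (fun t : ℝ => f (X + t • H)) (frobInner (grad X) H) 0)
    (hgradCont : Continuous grad)
    (A : Fin m → Matrix (Fin n) (Fin n) ℝ) (hAsym : ∀ i, (A i)ᵀ = A i)
    (γ δ Lf L η : ℝ) (hγ : 0 < γ) (hδ : 0 < δ) (hLf : 0 < Lf) (hL : 0 < L) (hη : 0 < η)
    (Uk Vk Uk1 Vk1 : Matrix (Fin n) (Fin r) ℝ) (lamk lamk1 : Fin m → ℝ)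
    (hstatk : grad (Vk * Ukᵀ) * Uk + (∑ i, lamk i • (A i * Uk)) - γ • (Uk - Vk) = 0)
    (hstatk1 : grad (Vk1 * Uk1ᵀ) * Uk1 + (∑ i, lamk1 i • (A i * Uk1)) - γ • (Uk1 - Vk1) = 0)
    (hUk : frobNorm Uk ≤ δ) (hVk : frobNorm Vk ≤ δ)
    (hUk1 : frobNorm Uk1 ≤ δ) (hVk1 : frobNorm Vk1 ≤ δ)
    (hsmink : η ≤ sigmaMin (Cmat A Uk)) (hsmink1 : η ≤ sigmaMin (Cmat A Uk1))
    (hgradB : ∀ X : Matrix (Fin n) (Fin n) ℝ, frobNorm X ≤ δ ^ 2 → frobNorm (grad X) ≤ Lf)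
    (hgradLip : ∀ X Y : Matrix (Fin n) (Fin n) ℝ, frobNorm X ≤ δ ^ 2 → frobNorm Y ≤ δ ^ 2 →
      frobNorm (grad X - grad Y) ≤ L * frobNorm (X - Y))
    (c₁ c₂ : ℝ)
    (hc₁ : c₁ = 2 / η ^ 2 * (L * δ ^ 2 + Lf + γ + 1 / η * Lf * δ * Real.sqrt (sA A)
      + 2 / η * γ * δ * Real.sqrt (sA A)) ^ 2)
    (hc₂ : c₂ = 2 / η ^ 2 * (L * δ ^ 2 + γ) ^ 2) :
    (vecNorm (fun i => lamk1 i - lamk i)) ^ 2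
      ≤ c₁ * (frobNorm (Uk1 - Uk)) ^ 2 + c₂ * (frobNorm (Vk1 - Vk)) ^ 2 :=
  dual_increment_bound_general n m r grad A γ δ Lf L η hγ hδ hL hη Uk Vk Uk1 Vk1 lamk lamk1 hstatk
    hstatk1 hUk hVk hUk1 hVk1 hsmink hsmink1 hgradB hgradLip c₁ c₂ hc₁ hc₂
end
end

section
/- Sufficient decrease of the augmented Lagrangian (Lemma 3.1(iv), given the dual-increment bound): Suppose f is convex, U^{k+1} minimizes U ↦ L_ρ(U, V^k, λ^k), V^{k+1} minimizes V ↦ L_ρ(U^{k+1}, V, λ^k), λ^{k+1} = λ^k + ρ(𝒜(U^{k+1}(V^{k+1})ᵀ) − b), and suppose constants c₁, c₂ ≥ 0 satisfy ‖λ^{k+1} − λ^k‖_2² ≤ c₁‖U^{k+1} − U^k‖_F² + c₂‖V^{k+1} − V^k‖_F². Then L_ρ(U^{k+1}, V^{k+1}, λ^{k+1}) − L_ρ(U^k, V^k, λ^k) ≤ −(γ/2 − c₁/ρ)‖U^{k+1} − U^k‖_F² − (γ/2 − c₂/ρ)‖V^{k+1} − V^k‖_F². -/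
open Matrix
open scoped BigOperators

noncomputable section

/-! ### Auxiliary lemmas for statement 14 -/

def frobSq {α β : Type*} [Fintype α] [Fintype β] (X : Matrix α β ℝ) : ℝ :=
  ∑ i, ∑ j, (X i j) ^ 2

lemma frobNorm_sq' {α β : Type*} [Fintype α] [Fintype β] (X : Matrix α β ℝ) :
    frobNorm X ^ 2 = frobSq X := by
  have h : 0 ≤ ∑ i, ∑ j, (X i j) ^ 2 :=
    Finset.sum_nonneg fun i _ => Finset.sum_nonneg fun j _ => sq_nonneg _
  simp [frobNorm, frobSq, Real.sq_sqrt h]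

lemma vecNorm_sq' {α : Type*} [Fintype α] (v : α → ℝ) :
    vecNorm v ^ 2 = ∑ i, (v i) ^ 2 := by
  have h : 0 ≤ ∑ i, (v i) ^ 2 := Finset.sum_nonneg fun i _ => sq_nonneg _
  simp [vecNorm, Real.sq_sqrt h]

lemma frobSq_sub_comm {α β : Type*} [Fintype α] [Fintype β] (X Y : Matrix α β ℝ) :
    frobSq (X - Y) = frobSq (Y - X) := by
  simp only [frobSq, Matrix.sub_apply]
  exact Finset.sum_congr rfl fun i _ => Finset.sum_congr rfl fun j _ => by ring

lemma Aop_combo {n m : ℕ} (A : Fin m → Matrix (Fin n) (Fin n) ℝ) (t s : ℝ)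
    (X Y : Matrix (Fin n) (Fin n) ℝ) (i : Fin m) :
    Aop A (t • X + s • Y) i = t * Aop A X i + s * Aop A Y i := by
  simp only [Aop, frobInner, Matrix.add_apply, Matrix.smul_apply, smul_eq_mul,
    Finset.mul_sum]
  rw [← Finset.sum_add_distrib]
  refine Finset.sum_congr rfl fun j _ => ?_
  rw [← Finset.sum_add_distrib]
  exact Finset.sum_congr rfl fun k _ => by ring

lemma frobSq_combo {α β : Type*} [Fintype α] [Fintype β] (t s : ℝ) (hts : t + s = 1)
    (X Y C : Matrix α β ℝ) :
    frobSq (t • X + s • Y - C)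
      = t * frobSq (X - C) + s * frobSq (Y - C) - t * s * frobSq (X - Y) := by
  have hs : s = 1 - t := by linarith
  subst hs
  simp only [frobSq, Matrix.sub_apply, Matrix.add_apply, Matrix.smul_apply, smul_eq_mul,
    Finset.mul_sum]
  rw [← Finset.sum_add_distrib, ← Finset.sum_sub_distrib]
  refine Finset.sum_congr rfl fun i _ => ?_
  rw [← Finset.sum_add_distrib, ← Finset.sum_sub_distrib]
  exact Finset.sum_congr rfl fun j _ => by ring

def psiFn {n m : ℕ} (f : Matrix (Fin n) (Fin n) ℝ → ℝ)
    (A : Fin m → Matrix (Fin n) (Fin n) ℝ) (b lam : Fin m → ℝ) (ρ : ℝ)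
    (Z : Matrix (Fin n) (Fin n) ℝ) : ℝ :=
  f Z + (∑ i, lam i * (Aop A Z i - b i)) + ρ / 2 * ∑ i, (Aop A Z i - b i) ^ 2

lemma psiFn_convex {n m : ℕ} (f : Matrix (Fin n) (Fin n) ℝ → ℝ)
    (hconv : ConvexOn ℝ Set.univ f)
    (A : Fin m → Matrix (Fin n) (Fin n) ℝ) (b lam : Fin m → ℝ) (ρ : ℝ) (hρ : 0 < ρ)
    (t s : ℝ) (ht : 0 ≤ t) (hs : 0 ≤ s) (hts : t + s = 1)
    (X Y : Matrix (Fin n) (Fin n) ℝ) :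
    psiFn f A b lam ρ (t • X + s • Y) ≤ t * psiFn f A b lam ρ X + s * psiFn f A b lam ρ Y := by
  have hf := hconv.2 (Set.mem_univ X) (Set.mem_univ Y) ht hs hts
  simp only [smul_eq_mul] at hf
  have hAi : ∀ i, Aop A (t • X + s • Y) i - b i
      = t * (Aop A X i - b i) + s * (Aop A Y i - b i) := by
    intro i
    rw [Aop_combo]
    have hs1 : s = 1 - t := by linarith
    subst hs1; ring
  have hlin : ∑ i, lam i * (Aop A (t • X + s • Y) i - b i)
      = t * (∑ i, lam i * (Aop A X i - b i)) + s * (∑ i, lam i * (Aop A Y i - b i)) := by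
    simp only [hAi, Finset.mul_sum]
    rw [← Finset.sum_add_distrib]
    exact Finset.sum_congr rfl fun i _ => by ring
  have hpen : ∑ i, (Aop A (t • X + s • Y) i - b i) ^ 2
      ≤ t * (∑ i, (Aop A X i - b i) ^ 2) + s * (∑ i, (Aop A Y i - b i) ^ 2) := by
    simp only [hAi, Finset.mul_sum]
    rw [← Finset.sum_add_distrib]
    refine Finset.sum_le_sum fun i _ => ?_
    nlinarith [sq_nonneg (Aop A X i - b i - (Aop A Y i - b i)), mul_nonneg ht hs]
  have hρ2 : (0:ℝ) ≤ ρ / 2 := by linarith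
  have hpen' := mul_le_mul_of_nonneg_left hpen hρ2
  have e : ρ / 2 * (t * (∑ i, (Aop A X i - b i) ^ 2) + s * (∑ i, (Aop A Y i - b i) ^ 2))
      = t * (ρ / 2 * ∑ i, (Aop A X i - b i) ^ 2) + s * (ρ / 2 * ∑ i, (Aop A Y i - b i) ^ 2) := by
    ring
  simp only [psiFn]
  rw [hlin]
  nlinarith [hf, hpen', e]

lemma strong_min_aux {n r : ℕ} (φ : Matrix (Fin n) (Fin r) ℝ → ℝ)
    (hφ : ∀ t s : ℝ, 0 ≤ t → 0 ≤ s → t + s = 1 → ∀ X Y : Matrix (Fin n) (Fin r) ℝ,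
      φ (t • X + s • Y) ≤ t * φ X + s * φ Y)
    (γ : ℝ) (hγ : 0 < γ) (C W₀ : Matrix (Fin n) (Fin r) ℝ)
    (hmin : ∀ W', φ W₀ + γ / 2 * frobSq (W₀ - C) ≤ φ W' + γ / 2 * frobSq (W' - C))
    (W : Matrix (Fin n) (Fin r) ℝ) :
    φ W₀ + γ / 2 * frobSq (W₀ - C) + γ / 2 * frobSq (W - W₀)
      ≤ φ W + γ / 2 * frobSq (W - C) := by
  set d := frobSq (W - W₀) with hd
  set gW := φ W + γ / 2 * frobSq (W - C) with hgW
  set g0 := φ W₀ + γ / 2 * frobSq (W₀ - C) with hg0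
  have key : ∀ t : ℝ, t ∈ Set.Ioo (0:ℝ) 1 → g0 + γ / 2 * ((1 - t) * d) ≤ gW := by
    rintro t ⟨ht0, ht1⟩
    have hs0 : (0:ℝ) ≤ 1 - t := by linarith
    have hts : t + (1 - t) = 1 := by ring
    have h1 := hφ t (1 - t) (le_of_lt ht0) hs0 hts W W₀
    have h2 := frobSq_combo t (1 - t) hts W W₀ C
    have h3 := hmin (t • W + (1 - t) • W₀)
    have h4 : g0 ≤ t * gW + (1 - t) * g0 - γ / 2 * (t * (1 - t) * d) := by
      have e1 : t * gW + (1 - t) * g0 - γ / 2 * (t * (1 - t) * d)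
          = (t * φ W + (1 - t) * φ W₀)
            + γ / 2 * (t * frobSq (W - C) + (1 - t) * frobSq (W₀ - C)
                - t * (1 - t) * frobSq (W - W₀)) := by
        rw [hgW, hg0, hd]; ring
      rw [e1, ← h2]
      have := add_le_add_right h1 (γ / 2 * frobSq (t • W + (1 - t) • W₀ - C))
      linarith [h3]
    have h6 : t * (g0 + γ / 2 * ((1 - t) * d)) ≤ t * gW := by nlinarith [h4]
    exact le_of_mul_le_mul_left h6 ht0
  have hcont : Continuous fun t : ℝ => g0 + γ / 2 * ((1 - t) * d) := by continuity
  have hlim0 : Filter.Tendsto (fun t : ℝ => g0 + γ / 2 * ((1 - t) * d))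
      (nhdsWithin (0:ℝ) (Set.Ioi 0)) (nhds (g0 + γ / 2 * ((1 - (0:ℝ)) * d))) :=
    (hcont.tendsto 0).mono_left (nhdsWithin_le_nhds (s := Set.Ioi 0))
  have hlim : Filter.Tendsto (fun t : ℝ => g0 + γ / 2 * ((1 - t) * d))
      (nhdsWithin (0:ℝ) (Set.Ioi 0)) (nhds (g0 + γ / 2 * (1 * d))) := by
    convert hlim0 using 2; norm_num
  have hev : ∀ᶠ t in nhdsWithin (0:ℝ) (Set.Ioi 0),
      g0 + γ / 2 * ((1 - t) * d) ≤ gW := by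
    filter_upwards [Ioo_mem_nhdsGT_of_mem
      (show (0:ℝ) ∈ Set.Ico (0:ℝ) 1 by constructor <;> norm_num)] with t ht
    exact key t ht
  have := le_of_tendsto hlim hev
  linarith

lemma augL_eq_psi {n m r : ℕ} (f : Matrix (Fin n) (Fin n) ℝ → ℝ)
    (A : Fin m → Matrix (Fin n) (Fin n) ℝ) (b : Fin m → ℝ) (ρ γ : ℝ)
    (U V : Matrix (Fin n) (Fin r) ℝ) (lam : Fin m → ℝ) :
    augL f A b ρ γ U V lam = psiFn f A b lam ρ (U * Vᵀ) + γ / 2 * frobSq (U - V) := by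
  simp only [augL, psiFn, frobNorm_sq', vecNorm_sq']
  ring
/-- Lemma 3.1(iv), given the dual-increment bound:
sufficient decrease of the augmented Lagrangian. -/
theorem sufficient_decrease_augL
    (n m r : ℕ) (hn : 0 < n) (hm : 0 < m) (hr : 0 < r)
    (f : Matrix (Fin n) (Fin n) ℝ → ℝ)
    (hconv : ConvexOn ℝ Set.univ f)
    (grad : Matrix (Fin n) (Fin n) ℝ → Matrix (Fin n) (Fin n) ℝ)
    (hgrad : ∀ X H : Matrix (Fin n) (Fin n) ℝ,
      HasDerivAt (fun t : ℝ => f (X + t • H)) (frobInner (grad X) H) 0)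
    (hgradCont : Continuous grad)
    (A : Fin m → Matrix (Fin n) (Fin n) ℝ) (hAsym : ∀ i, (A i)ᵀ = A i)
    (b : Fin m → ℝ) (ρ γ : ℝ) (hρ : 0 < ρ) (hγ : 0 < γ)
    (Uk Vk Uk1 Vk1 : Matrix (Fin n) (Fin r) ℝ) (lamk lamk1 : Fin m → ℝ)
    (hUmin : ∀ U' : Matrix (Fin n) (Fin r) ℝ,
      augL f A b ρ γ Uk1 Vk lamk ≤ augL f A b ρ γ U' Vk lamk)
    (hVmin : ∀ V' : Matrix (Fin n) (Fin r) ℝ,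
      augL f A b ρ γ Uk1 Vk1 lamk ≤ augL f A b ρ γ Uk1 V' lamk)
    (hlamUpd : lamk1 = fun i => lamk i + ρ * (Aop A (Uk1 * Vk1ᵀ) i - b i))
    (c₁ c₂ : ℝ) (hc₁ : 0 ≤ c₁) (hc₂ : 0 ≤ c₂)
    (hdual : (vecNorm (fun i => lamk1 i - lamk i)) ^ 2
      ≤ c₁ * (frobNorm (Uk1 - Uk)) ^ 2 + c₂ * (frobNorm (Vk1 - Vk)) ^ 2) :
    augL f A b ρ γ Uk1 Vk1 lamk1 - augL f A b ρ γ Uk Vk lamk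
      ≤ -(γ / 2 - c₁ / ρ) * (frobNorm (Uk1 - Uk)) ^ 2
        - (γ / 2 - c₂ / ρ) * (frobNorm (Vk1 - Vk)) ^ 2 := by
  subst hlamUpd
  simp only [] at hdual
  -- abbreviations
  have ha : frobNorm (Uk1 - Uk) ^ 2 = frobSq (Uk1 - Uk) := frobNorm_sq' _
  have hb : frobNorm (Vk1 - Vk) ^ 2 = frobSq (Vk1 - Vk) := frobNorm_sq' _
  -- U-step sufficient decrease
  have hU := strong_min_aux (fun U => psiFn f A b lamk ρ (U * Vkᵀ))
    (by
      intro t s ht hs hts X Y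
      have hlin : (t • X + s • Y) * Vkᵀ = t • (X * Vkᵀ) + s • (Y * Vkᵀ) := by
        rw [Matrix.add_mul, Matrix.smul_mul, Matrix.smul_mul]
      show psiFn f A b lamk ρ ((t • X + s • Y) * Vkᵀ) ≤ _
      rw [hlin]
      exact psiFn_convex f hconv A b lamk ρ hρ t s ht hs hts (X * Vkᵀ) (Y * Vkᵀ))
    γ hγ Vk Uk1
    (by
      intro W'
      have h := hUmin W'
      rwa [augL_eq_psi, augL_eq_psi] at h)
    Uk
  have hU' : augL f A b ρ γ Uk1 Vk lamk + γ / 2 * frobSq (Uk1 - Uk)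
      ≤ augL f A b ρ γ Uk Vk lamk := by
    rw [augL_eq_psi, augL_eq_psi, frobSq_sub_comm Uk1 Uk]
    simpa using hU
  -- V-step sufficient decrease
  have hV := strong_min_aux (fun V => psiFn f A b lamk ρ (Uk1 * Vᵀ))
    (by
      intro t s ht hs hts X Y
      have hlin : Uk1 * (t • X + s • Y)ᵀ = t • (Uk1 * Xᵀ) + s • (Uk1 * Yᵀ) := by
        rw [Matrix.transpose_add, Matrix.transpose_smul, Matrix.transpose_smul,
          Matrix.mul_add, Matrix.mul_smul, Matrix.mul_smul]
      show psiFn f A b lamk ρ (Uk1 * (t • X + s • Y)ᵀ) ≤ _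
      rw [hlin]
      exact psiFn_convex f hconv A b lamk ρ hρ t s ht hs hts (Uk1 * Xᵀ) (Uk1 * Yᵀ))
    γ hγ Uk1 Vk1
    (by
      intro W'
      have h := hVmin W'
      rw [augL_eq_psi, augL_eq_psi] at h
      rwa [frobSq_sub_comm Uk1 Vk1, frobSq_sub_comm Uk1 W'] at h)
    Vk
  have hV' : augL f A b ρ γ Uk1 Vk1 lamk + γ / 2 * frobSq (Vk1 - Vk)
      ≤ augL f A b ρ γ Uk1 Vk lamk := by
    rw [augL_eq_psi, augL_eq_psi, frobSq_sub_comm Uk1 Vk1, frobSq_sub_comm Uk1 Vk,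
      frobSq_sub_comm Vk1 Vk]
    simpa using hV
  -- dual-step ascent
  have hsum : ∑ i, (lamk i + ρ * (Aop A (Uk1 * Vk1ᵀ) i - b i)) * (Aop A (Uk1 * Vk1ᵀ) i - b i)
      = ∑ i, lamk i * (Aop A (Uk1 * Vk1ᵀ) i - b i)
        + ρ * ∑ i, (Aop A (Uk1 * Vk1ᵀ) i - b i) ^ 2 := by
    rw [Finset.mul_sum, ← Finset.sum_add_distrib]
    exact Finset.sum_congr rfl fun i _ => by ring
  have hdiff : augL f A b ρ γ Uk1 Vk1 (fun i => lamk i + ρ * (Aop A (Uk1 * Vk1ᵀ) i - b i))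
      - augL f A b ρ γ Uk1 Vk1 lamk = ρ * ∑ i, (Aop A (Uk1 * Vk1ᵀ) i - b i) ^ 2 := by
    simp only [augL]
    linarith [hsum]
  -- rewrite the dual bound
  have hdual2 : ρ ^ 2 * ∑ i, (Aop A (Uk1 * Vk1ᵀ) i - b i) ^ 2
      ≤ c₁ * frobSq (Uk1 - Uk) + c₂ * frobSq (Vk1 - Vk) := by
    rw [← ha, ← hb]
    have e : vecNorm (fun i => lamk i + ρ * (Aop A (Uk1 * Vk1ᵀ) i - b i) - lamk i) ^ 2
        = ρ ^ 2 * ∑ i, (Aop A (Uk1 * Vk1ᵀ) i - b i) ^ 2 := by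
      rw [vecNorm_sq', Finset.mul_sum]
      exact Finset.sum_congr rfl fun i _ => by ring
    rw [← e]
    exact hdual
  have hρS : ρ * ∑ i, (Aop A (Uk1 * Vk1ᵀ) i - b i) ^ 2
      ≤ (c₁ * frobSq (Uk1 - Uk) + c₂ * frobSq (Vk1 - Vk)) / ρ := by
    rw [le_div_iff₀ hρ]
    nlinarith [hdual2]
  have hfin : -(γ / 2 - c₁ / ρ) * frobSq (Uk1 - Uk) - (γ / 2 - c₂ / ρ) * frobSq (Vk1 - Vk)
      = (c₁ * frobSq (Uk1 - Uk) + c₂ * frobSq (Vk1 - Vk)) / ρ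
        - γ / 2 * frobSq (Uk1 - Uk) - γ / 2 * frobSq (Vk1 - Vk) := by
    field_simp
    ring
  rw [ha, hb]
  linarith [hU', hV', hdiff, hρS, hfin]
end
end
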